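/- For every real number x with x > 1/3 and every real number z with z > 3x + √(9x² − 1), the series ∑_{n=0}^∞ ((−1)^n/(2n+1)) · C_{2n+1}(x)/z^{2n+1} converges and equals (1/2) · arctan(6xz / (z² − 1)). -/

import Mathlib

/-- Lucas-balancing polynomials: `C 0 x = 1`, `C 1 x = 3x`,
`C (n+2) x = 6 x C (n+1) x - C n x`. -/
def lucasBalancing (x : ℝ) : ℕ → ℝ
  | 0 => 1
  | 1 => 3 * x
  | n + 2 => 6 * x * lucasBalancing x (n + 1) - lucasBalancing x n

lemma lucasBalancing_closed (x a b : ℝ) (hab : a + b = 6 * x) (hm : a * b = 1) :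
    ∀ n, lucasBalancing x n * 2 = a ^ n + b ^ n := by
  intro n
  induction n using Nat.twoStepInduction with
  | zero => norm_num [lucasBalancing]
  | one => simp [lucasBalancing]; linarith
  | more n ih1 ih2 =>
    have : a ^ (n + 2) + b ^ (n + 2)
        = (a + b) * (a ^ (n + 1) + b ^ (n + 1)) - (a * b) * (a ^ n + b ^ n) := by ring
    rw [lucasBalancing]
    rw [this, hab, hm]
    linear_combination (6 * x) * ih2 - ih1

theorem lucasBalancing_arctan_series (x z : ℝ) (hx : x > 1 / 3)
    (hz : z > 3 * x + Real.sqrt (9 * x ^ 2 - 1)) :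
    HasSum
      (fun n : ℕ => (-1 : ℝ) ^ n / (2 * (n : ℝ) + 1) *
        (lucasBalancing x (2 * n + 1) / z ^ (2 * n + 1)))
      (1 / 2 * Real.arctan (6 * x * z / (z ^ 2 - 1))) := by
  have hd : (0:ℝ) ≤ 9 * x ^ 2 - 1 := by nlinarith
  set s := Real.sqrt (9 * x ^ 2 - 1) with hs
  have hs2 : s ^ 2 = 9 * x ^ 2 - 1 := Real.sq_sqrt hd
  have hsnn : 0 ≤ s := Real.sqrt_nonneg _
  set a := 3 * x + s with ha
  set b := 3 * x - s with hb
  have hab : a + b = 6 * x := by ring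
  have hm : a * b = 1 := by rw [ha, hb]; nlinarith
  have hb0 : 0 < b := by nlinarith
  have ha1 : 1 < a := by nlinarith
  have hz1 : 1 < z := lt_trans ha1 hz
  have hz0 : 0 < z := by linarith
  have hban : ‖b / z‖ < 1 := by
    rw [Real.norm_eq_abs, abs_div, abs_of_pos hb0, abs_of_pos hz0, div_lt_one hz0]
    nlinarith
  have haan : ‖a / z‖ < 1 := by
    rw [Real.norm_eq_abs, abs_div, abs_of_pos (by linarith : (0:ℝ) < a), abs_of_pos hz0,
      div_lt_one hz0]
    linarith [hz]
  have h1 := Real.hasSum_arctan haan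
  have h2 := Real.hasSum_arctan hban
  have hsum := (h1.add h2).div_const 2
  have key : (fun n : ℕ => (-1 : ℝ) ^ n / (2 * (n : ℝ) + 1) *
        (lucasBalancing x (2 * n + 1) / z ^ (2 * n + 1)))
      = fun n : ℕ => ((-1) ^ n * (a / z) ^ (2 * n + 1) / ((2 * n + 1 : ℕ) : ℝ)
        + (-1) ^ n * (b / z) ^ (2 * n + 1) / ((2 * n + 1 : ℕ) : ℝ)) / 2 := by
    funext n
    have hc := lucasBalancing_closed x a b hab hm (2 * n + 1)
    have hzp : z ^ (2 * n + 1) ≠ 0 := pow_ne_zero _ (by linarith)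
    have hden : ((2 * n + 1 : ℕ) : ℝ) ≠ 0 := by positivity
    push_cast
    rw [div_pow, div_pow]
    field_simp
    linear_combination hc
  rw [key] at *
  have harc : (Real.arctan (a / z) + Real.arctan (b / z)) / 2
      = 1 / 2 * Real.arctan (6 * x * z / (z ^ 2 - 1)) := by
    have hmul : (a / z) * (b / z) < 1 := by
      rw [div_mul_div_comm, hm]
      rw [div_lt_one (by positivity)]
      nlinarith
    have hne : z ^ 2 - 1 ≠ 0 := by nlinarith
    have heq : (a / z + b / z) / (1 - a / z * (b / z)) = 6 * x * z / (z ^ 2 - 1) := by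
      rw [← add_div, div_mul_div_comm, hm, hab]
      have hz0' : z ≠ 0 := ne_of_gt hz0
      have h3 : -z + z ^ 3 = z * (z ^ 2 - 1) := by ring
      field_simp
    rw [Real.arctan_add hmul, heq]
    ring
  rw [← harc]
  exact hsum
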